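/- arXiv:2007.03574 — 8 statements merged into one kernel-verified Lean document; each statement's English description precedes it below -/
import Mathlib

section
/- Let S and A be finite nonempty types, let γ ∈ (0,1), let R : S × A → ℝ satisfy 0 ≤ R(s,a) ≤ 1 for all (s,a), and let T₁ and T₂ be two transition functions on S and A such that for every (s,a), ∑_{s'∈S} |T₁ s a s' − T₂ s a s'| ≤ β for some β ≥ 0. Then for every policy π : S → A, every (s,a) ∈ S × A, and every horizon H ∈ ℕ, the finite-horizon Q-values computed with T₁ and T₂ respectively satisfy |Q₁(s,a,H) − Q₂(s,a,H)| ≤ min(γ·β/(1−γ)², β·H²). -/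
open Finset

/-- Finite-horizon Q-value: `Qval T R γ π t s a` is the `t`-step Q-value of policy `π`
in the MDP with transitions `T`, rewards `R`, and discount `γ`. -/
noncomputable def Qval {S A : Type*} [Fintype S] (T : S → A → S → ℝ) (R : S → A → ℝ)
    (γ : ℝ) (π : S → A) : ℕ → S → A → ℝ
  | 0 => fun _ _ => 0
  | (t + 1) => fun s a => R s a + γ * ∑ s', T s a s' * Qval T R γ π t s' (π s')

/-!
One step of the recursion gives the simulation bound
`‖Q₁(t+1) - Q₂(t+1)‖∞ ≤ γ (β ‖Q₂(t)‖∞ + ‖Q₁(t) - Q₂(t)‖∞)`, and rewards in `[0, 1]` give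
`‖Q₂(t)‖∞ ≤ ∑_{i<t} γ^i`, which is at most `1/(1-γ)` and at most `t`. The constant
`γβ/(1-γ)²` and the sequence `βt²` are then super-solutions of this recursion starting at `0`,
so by induction both bound the gap.
-/

section WeightedSums

variable {ι : Type*} [Fintype ι] {p q f g : ι → ℝ} {B D : ℝ}

lemma abs_sum_mul_le_of_abs_le (hp0 : ∀ i, 0 ≤ p i) (hp1 : ∑ i, p i = 1) (hf : ∀ i, |f i| ≤ D) :
    |∑ i, p i * f i| ≤ D :=
  calc |∑ i, p i * f i| ≤ ∑ i, p i * |f i| := by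
        simpa only [abs_mul, abs_of_nonneg (hp0 _)] using
          abs_sum_le_sum_abs (fun i ↦ p i * f i) univ
    _ ≤ ∑ i, p i * D := by gcongr with i; exacts [hp0 i, hf i]
    _ = D := by rw [← sum_mul, hp1, one_mul]

/-- Simulation bound: changing the weights costs their `ℓ¹` distance times `‖g‖∞`,
changing the integrand costs `‖f - g‖∞`. -/
lemma abs_sum_mul_sub_sum_mul_le (hp0 : ∀ i, 0 ≤ p i) (hp1 : ∑ i, p i = 1)
    (hg : ∀ i, |g i| ≤ B) (hfg : ∀ i, |f i - g i| ≤ D) :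
    |∑ i, p i * f i - ∑ i, q i * g i| ≤ (∑ i, |p i - q i|) * B + D := by
  have hsplit : ∑ i, p i * f i - ∑ i, q i * g i
      = ∑ i, (p i - q i) * g i + ∑ i, p i * (f i - g i) := by
    simp only [← sum_add_distrib, ← sum_sub_distrib]; exact sum_congr rfl fun _ _ ↦ by ring
  have hweights : |∑ i, (p i - q i) * g i| ≤ (∑ i, |p i - q i|) * B :=
    calc |∑ i, (p i - q i) * g i| ≤ ∑ i, |p i - q i| * |g i| := by
          simpa only [abs_mul] using abs_sum_le_sum_abs (fun i ↦ (p i - q i) * g i) univ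
      _ ≤ ∑ i, |p i - q i| * B := by gcongr with i; exact hg i
      _ = (∑ i, |p i - q i|) * B := (sum_mul ..).symm
  rw [hsplit]
  exact (abs_add_le _ _).trans (add_le_add hweights (abs_sum_mul_le_of_abs_le hp0 hp1 hfg))

end WeightedSums

section Qval

variable {S A : Type*} [Fintype S] {T T₁ T₂ : S → A → S → ℝ} {R : S → A → ℝ} {γ β : ℝ}
  {π : S → A}

lemma abs_Qval_le_geom_sum (hγ : 0 ≤ γ) (hR : ∀ s a, |R s a| ≤ 1)
    (hT0 : ∀ s a s', 0 ≤ T s a s') (hT1 : ∀ s a, ∑ s', T s a s' = 1) (t : ℕ) (s : S) (a : A) :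
    |Qval T R γ π t s a| ≤ ∑ i ∈ range t, γ ^ i := by
  induction t generalizing s a with
  | zero => simp [Qval]
  | succ t ih =>
    have hnext := abs_sum_mul_le_of_abs_le (hT0 s a) (hT1 s a) fun s' ↦ ih s' (π s')
    calc |Qval T R γ π (t + 1) s a|
        ≤ |R s a| + γ * |∑ s', T s a s' * Qval T R γ π t s' (π s')| := by
          rw [Qval]; exact (abs_add_le _ _).trans_eq (by rw [abs_mul, abs_of_nonneg hγ])
      _ ≤ 1 + γ * ∑ i ∈ range t, γ ^ i :=
          add_le_add (hR s a) (mul_le_mul_of_nonneg_left hnext hγ)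
      _ = ∑ i ∈ range (t + 1), γ ^ i := by rw [geom_sum_succ, add_comm]

lemma abs_Qval_succ_sub_le (hγ : 0 ≤ γ) (hT₁0 : ∀ s a s', 0 ≤ T₁ s a s')
    (hT₁1 : ∀ s a, ∑ s', T₁ s a s' = 1) (hd : ∀ s a, ∑ s', |T₁ s a s' - T₂ s a s'| ≤ β)
    {t : ℕ} {B D : ℝ} (hB0 : 0 ≤ B) (hB : ∀ s a, |Qval T₂ R γ π t s a| ≤ B)
    (hD : ∀ s a, |Qval T₁ R γ π t s a - Qval T₂ R γ π t s a| ≤ D) (s : S) (a : A) :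
    |Qval T₁ R γ π (t + 1) s a - Qval T₂ R γ π (t + 1) s a| ≤ γ * (β * B + D) := by
  have hsum := abs_sum_mul_sub_sum_mul_le (q := T₂ s a) (hT₁0 s a) (hT₁1 s a)
    (fun s' ↦ hB s' (π s')) (fun s' ↦ hD s' (π s'))
  rw [Qval, Qval, add_sub_add_left_eq_sub, ← mul_sub, abs_mul, abs_of_nonneg hγ]
  gcongr
  exact hsum.trans (by gcongr; exact hd s a)

lemma abs_Qval_sub_le (hγ : 0 ≤ γ) (hT₁0 : ∀ s a s', 0 ≤ T₁ s a s')
    (hT₁1 : ∀ s a, ∑ s', T₁ s a s' = 1) (hd : ∀ s a, ∑ s', |T₁ s a s' - T₂ s a s'| ≤ β)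
    {B D : ℕ → ℝ} (hB0 : ∀ t, 0 ≤ B t) (hB : ∀ t s a, |Qval T₂ R γ π t s a| ≤ B t)
    (hD0 : 0 ≤ D 0) (hstep : ∀ t, γ * (β * B t + D t) ≤ D (t + 1)) (t : ℕ) (s : S) (a : A) :
    |Qval T₁ R γ π t s a - Qval T₂ R γ π t s a| ≤ D t := by
  induction t generalizing s a with
  | zero => simpa [Qval] using hD0
  | succ t ih =>
    exact (abs_Qval_succ_sub_le hγ hT₁0 hT₁1 hd (hB0 t) (hB t) ih s a).trans (hstep t)

end Qval

theorem epsilon_close_finite_rewards_general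
    {S A : Type*} [Fintype S]
    (γ : ℝ) (hγ0 : 0 < γ) (hγ1 : γ < 1)
    (R : S → A → ℝ) (hR0 : ∀ s a, 0 ≤ R s a) (hR1 : ∀ s a, R s a ≤ 1)
    (T₁ T₂ : S → A → S → ℝ)
    (hT₁0 : ∀ s a s', 0 ≤ T₁ s a s') (hT₁1 : ∀ s a, ∑ s', T₁ s a s' = 1)
    (hT₂0 : ∀ s a s', 0 ≤ T₂ s a s') (hT₂1 : ∀ s a, ∑ s', T₂ s a s' = 1)
    (β : ℝ) (hβ : 0 ≤ β)
    (hd : ∀ s a, ∑ s', |T₁ s a s' - T₂ s a s'| ≤ β)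
    (π : S → A) (s : S) (a : A) (H : ℕ) :
    |Qval T₁ R γ π H s a - Qval T₂ R γ π H s a|
      ≤ min (γ * β / (1 - γ) ^ 2) (β * (H : ℝ) ^ 2) := by
  set G : ℕ → ℝ := fun t ↦ ∑ i ∈ range t, γ ^ i
  have hG_le_inv : ∀ t, G t ≤ 1 / (1 - γ) := fun t ↦ by
    simpa [G, ← range_eq_Ico] using geom_sum_Ico_le_of_lt_one (m := 0) (n := t) hγ0.le hγ1
  have hG_le_horizon : ∀ t, G t ≤ t := fun t ↦
    (sum_le_sum fun i _ ↦ pow_le_one₀ hγ0.le hγ1.le).trans_eq (by simp)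
  have hG0 : ∀ t, 0 ≤ G t := fun t ↦ sum_nonneg fun i _ ↦ pow_nonneg hγ0.le i
  have hQ₂ : ∀ t s a, |Qval T₂ R γ π t s a| ≤ G t :=
    abs_Qval_le_geom_sum hγ0.le (fun s a ↦ abs_le.mpr ⟨by linarith [hR0 s a], hR1 s a⟩) hT₂0 hT₂1
  refine le_min ?_ ?_
  · refine abs_Qval_sub_le (D := fun _ ↦ γ * β / (1 - γ) ^ 2) hγ0.le hT₁0 hT₁1 hd hG0 hQ₂
      (div_nonneg (mul_nonneg hγ0.le hβ) (sq_nonneg _)) (fun t ↦ ?_) H s a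
    calc γ * (β * G t + γ * β / (1 - γ) ^ 2) ≤ γ * (β * (1 / (1 - γ)) + γ * β / (1 - γ) ^ 2) := by
          gcongr; exact hG_le_inv t
      _ = γ * β / (1 - γ) ^ 2 := by field_simp; ring
  · refine abs_Qval_sub_le (D := fun t ↦ β * (t : ℝ) ^ 2) hγ0.le hT₁0 hT₁1 hd hG0 hQ₂
      (by simp) (fun t ↦ ?_) H s a
    have ht : (0 : ℝ) ≤ t := t.cast_nonneg
    calc γ * (β * G t + β * (t : ℝ) ^ 2) ≤ 1 * (β * t + β * (t : ℝ) ^ 2) := by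
          gcongr; exact hG_le_horizon t
      _ ≤ β * ((t + 1 : ℕ) : ℝ) ^ 2 := by push_cast; nlinarith

theorem epsilon_close_finite_rewards
    {S A : Type*} [Fintype S] [Nonempty S] [Fintype A] [Nonempty A]
    (γ : ℝ) (hγ0 : 0 < γ) (hγ1 : γ < 1)
    (R : S → A → ℝ) (hR0 : ∀ s a, 0 ≤ R s a) (hR1 : ∀ s a, R s a ≤ 1)
    (T₁ T₂ : S → A → S → ℝ)
    (hT₁0 : ∀ s a s', 0 ≤ T₁ s a s') (hT₁1 : ∀ s a, ∑ s', T₁ s a s' = 1)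
    (hT₂0 : ∀ s a s', 0 ≤ T₂ s a s') (hT₂1 : ∀ s a, ∑ s', T₂ s a s' = 1)
    (β : ℝ) (hβ : 0 ≤ β)
    (hd : ∀ s a, ∑ s', |T₁ s a s' - T₂ s a s'| ≤ β)
    (π : S → A) (s : S) (a : A) (H : ℕ) :
    |Qval T₁ R γ π H s a - Qval T₂ R γ π H s a|
      ≤ min (γ * β / (1 - γ) ^ 2) (β * (H : ℝ) ^ 2) :=
  epsilon_close_finite_rewards_general γ hγ0 hγ1 R hR0 hR1 T₁ T₂ hT₁0 hT₁1 hT₂0 hT₂1 β hβ hd π s a H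
end

section
/- Let S and A be finite nonempty types, γ ∈ (0,1), R : S × A → ℝ a reward function with R(s,a) ≤ 1 for all (s,a), π : S → A a policy, s₁ ∈ S a start state, H ∈ ℕ a horizon, and K ⊆ S × A. Let T and T' be two transition functions that agree on K, i.e., T s a = T' s a whenever (s,a) ∈ K. Assume that R(s', π s') ≥ 0 for every state s' that is the endpoint of some path of length at most H from s₁ with positive probability under T and π. Let Pr(A) denote the probability, under T and π starting from s₁, of the set of length-H paths (s₀,…,s_H) for which (s_t, π(s_t)) ∉ K for some t ∈ {0,…,H}. Then the H-horizon values satisfy V_T^π(s₁,H) ≥ V_{T'}^π(s₁,H) − Pr(A)/(1−γ). -/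
/-!
Split the paths from `s₁` into those that stay in `K` and those that escape it. On paths that stay
in `K` the two path measures coincide, so the values differ only on escaping paths. There the
`T`-contribution is nonnegative, because every prefix of a positive-probability path has positive
probability and so ends in a state with nonnegative reward, while the `T'`-contribution is at most
`Pr_{T'}(escape) / (1 - γ)`, discounted returns being bounded by `∑ γ ^ t ≤ 1 / (1 - γ)`. Finally
`Pr_{T'}(escape) = Pr_T(escape)`: both measures have total mass one and agree off the escape event.
-/

open Finset

/-- Probability of a length-`H` path `p : Fin (H+1) → S` under transitions `T` and policy `π`:
the product of the one-step transition probabilities along the path. -/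
noncomputable def pathProb {S A : Type*} (T : S → A → S → ℝ) (π : S → A) (H : ℕ)
    (p : Fin (H + 1) → S) : ℝ :=
  ∏ t : Fin H, T (p t.castSucc) (π (p t.castSucc)) (p t.succ)

/-- `H`-horizon value of policy `π` from state `s`: the sum over all length-`H` paths
starting at `s` of the path probability times the discounted cumulative reward. -/
noncomputable def valueH {S A : Type*} [Fintype S] [DecidableEq S]
    (T : S → A → S → ℝ) (R : S → A → ℝ) (γ : ℝ) (π : S → A) (H : ℕ) (s : S) : ℝ :=
  ∑ p ∈ Finset.univ.filter (fun p : Fin (H + 1) → S => p 0 = s),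
    pathProb T π H p * ∑ t : Fin (H + 1), γ ^ (t : ℕ) * R (p t) (π (p t))

section PathProb

variable {S A : Type*} (T : S → A → S → ℝ) (π : S → A)

lemma pathProb_nonneg (hT0 : ∀ s a s', 0 ≤ T s a s') (H : ℕ) (p : Fin (H + 1) → S) :
    0 ≤ pathProb T π H p :=
  prod_nonneg fun _ _ => hT0 _ _ _

lemma pathProb_cons (H : ℕ) (s : S) (q : Fin (H + 1) → S) :
    pathProb T π (H + 1) (Fin.cons s q) = T s (π s) (q 0) * pathProb T π H q := by
  simp [pathProb, Fin.prod_univ_succ]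

lemma pathProb_eq_of_forall_mem (T' : S → A → S → ℝ) (K : Set (S × A))
    (hagree : ∀ s a, (s, a) ∈ K → T s a = T' s a) {H : ℕ} {p : Fin (H + 1) → S}
    (hp : ∀ t, (p t, π (p t)) ∈ K) : pathProb T π H p = pathProb T' π H p :=
  prod_congr rfl fun t _ => by rw [hagree _ _ (hp t.castSucc)]

lemma pathProb_take_pos (hT0 : ∀ s a s', 0 ≤ T s a s') {H : ℕ} {p : Fin (H + 1) → S}
    (hpos : 0 < pathProb T π H p) {t : ℕ} (ht : t ≤ H) :
    0 < pathProb T π t (Fin.take (t + 1) (Nat.succ_le_succ ht) p) := by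
  have hfactor := prod_ne_zero_iff.mp hpos.ne'
  refine prod_pos fun j _ => (hT0 _ _ _).lt_of_ne' ?_
  convert hfactor ⟨j, j.2.trans_le ht⟩ (mem_univ _) using 3 <;>
    simp only [Fin.take_apply] <;> congr 1

lemma sum_pathProb_cons_eq_one [Fintype S] (hT1 : ∀ s a, ∑ s', T s a s' = 1) :
    ∀ (H : ℕ) (s : S), ∑ q : Fin H → S, pathProb T π H (Fin.cons s q) = 1
  | 0, s => by simp [pathProb]
  | H + 1, s => calc
      ∑ q : Fin (H + 1) → S, pathProb T π (H + 1) (Fin.cons s q)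
          = ∑ s', ∑ q : Fin H → S, T s (π s) s' * pathProb T π H (Fin.cons s' q) := by
        rw [← Fintype.sum_prod_type', ← (Fin.consEquiv fun _ => S).sum_comp]
        simp [pathProb_cons, Fin.consEquiv]
      _ = ∑ s', T s (π s) s' := by simp_rw [← mul_sum, sum_pathProb_cons_eq_one hT1 H, mul_one]
      _ = 1 := hT1 s (π s)

end PathProb

lemma sum_filter_apply_zero_eq_sum_cons {S M : Type*} [Fintype S] [DecidableEq S]
    [AddCommMonoid M] (n : ℕ) (s : S) (f : (Fin (n + 1) → S) → M) :
    ∑ p ∈ univ.filter (fun p : Fin (n + 1) → S => p 0 = s), f p = ∑ q, f (Fin.cons s q) := by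
  rw [sum_filter, ← (Fin.consEquiv fun _ => S).sum_comp, Fintype.sum_prod_type]
  simp [Fin.consEquiv]

lemma sum_pathProb_eq_one {S A : Type*} [Fintype S] [DecidableEq S] (T : S → A → S → ℝ)
    (hT1 : ∀ s a, ∑ s', T s a s' = 1) (π : S → A) (H : ℕ) (s : S) :
    ∑ p ∈ univ.filter (fun p : Fin (H + 1) → S => p 0 = s), pathProb T π H p = 1 := by
  rw [sum_filter_apply_zero_eq_sum_cons]
  exact sum_pathProb_cons_eq_one T π hT1 H s

lemma reward_nonneg_of_pathProb_pos {S A : Type*} {T : S → A → S → ℝ} {R : S → A → ℝ}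
    {π : S → A} {s₁ : S} {H : ℕ} (hT0 : ∀ s a s', 0 ≤ T s a s')
    (hnonneg : ∀ (t : ℕ), t ≤ H → ∀ p : Fin (t + 1) → S, p 0 = s₁ →
      0 < pathProb T π t p → 0 ≤ R (p (Fin.last t)) (π (p (Fin.last t))))
    {p : Fin (H + 1) → S} (hp0 : p 0 = s₁) (hpos : 0 < pathProb T π H p) (t : Fin (H + 1)) :
    0 ≤ R (p t) (π (p t)) := by
  have ht : (t : ℕ) ≤ H := Nat.lt_succ_iff.mp t.2
  have hlast : Fin.castLE (Nat.succ_le_succ ht) (Fin.last t) = t := Fin.ext rfl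
  simpa [Fin.take_apply, hlast] using hnonneg t ht (Fin.take (t + 1) (Nat.succ_le_succ ht) p)
    (by simpa using hp0) (pathProb_take_pos T π hT0 hpos ht)

lemma sum_pow_mul_le_inv_one_sub {γ : ℝ} (hγ0 : 0 ≤ γ) (hγ1 : γ < 1) {n : ℕ} {r : Fin n → ℝ}
    (hr : ∀ t, r t ≤ 1) : ∑ t : Fin n, γ ^ (t : ℕ) * r t ≤ (1 - γ)⁻¹ :=
  calc ∑ t : Fin n, γ ^ (t : ℕ) * r t
      ≤ ∑ t : Fin n, γ ^ (t : ℕ) :=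
        sum_le_sum fun t _ => mul_le_of_le_one_right (pow_nonneg hγ0 _) (hr t)
    _ = ∑ i ∈ Ico 0 n, γ ^ i := by rw [Fin.sum_univ_eq_sum_range (γ ^ ·), range_eq_Ico]
    _ ≤ γ ^ 0 / (1 - γ) := geom_sum_Ico_le_of_lt_one hγ0 hγ1
    _ = (1 - γ)⁻¹ := by rw [pow_zero, one_div]

lemma sum_mul_le_sum_mul_add_sum_filter_not_mul {ι : Type*} (s : Finset ι) (good : ι → Prop)
    [DecidablePred good] {p q f : ι → ℝ} {M : ℝ}
    (hsum : ∑ i ∈ s, p i = ∑ i ∈ s, q i) (hpq : ∀ i ∈ s, good i → p i = q i)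
    (hp : ∀ i ∈ s, ¬ good i → 0 ≤ p i * f i) (hq : ∀ i ∈ s, ¬ good i → 0 ≤ q i)
    (hfM : ∀ i ∈ s, ¬ good i → f i ≤ M) :
    ∑ i ∈ s, q i * f i ≤ ∑ i ∈ s, p i * f i + (∑ i ∈ s with ¬ good i, p i) * M := by
  have hgood {g : ι → ℝ} : ∑ i ∈ s with good i, p i * g i = ∑ i ∈ s with good i, q i * g i :=
    sum_congr rfl fun i hi => by rw [hpq i (mem_filter.1 hi).1 (mem_filter.1 hi).2]
  have hmass : ∑ i ∈ s with ¬ good i, q i = ∑ i ∈ s with ¬ good i, p i := by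
    have hgood_mass := hgood (g := fun _ => 1)
    simp only [mul_one] at hgood_mass
    rw [← sum_filter_add_sum_filter_not s good, ← sum_filter_add_sum_filter_not s good q] at hsum
    linarith
  have hbad_q : ∑ i ∈ s with ¬ good i, q i * f i ≤ (∑ i ∈ s with ¬ good i, q i) * M := by
    rw [sum_mul]
    refine sum_le_sum fun i hi => ?_
    rw [mem_filter] at hi
    exact mul_le_mul_of_nonneg_left (hfM i hi.1 hi.2) (hq i hi.1 hi.2)
  have hbad_p : 0 ≤ ∑ i ∈ s with ¬ good i, p i * f i :=
    sum_nonneg fun i hi => hp i (mem_filter.1 hi).1 (mem_filter.1 hi).2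
  rw [← sum_filter_add_sum_filter_not s good (fun i => q i * f i),
    ← sum_filter_add_sum_filter_not s good (fun i => p i * f i), hgood, ← hmass]
  linarith

open Classical in
theorem escape_prob_general
    {S A : Type*} [Fintype S] [DecidableEq S]
    (γ : ℝ) (hγ0 : 0 < γ) (hγ1 : γ < 1)
    (R : S → A → ℝ) (hR1 : ∀ s a, R s a ≤ 1)
    (π : S → A) (s₁ : S) (H : ℕ) (K : Set (S × A))
    (T T' : S → A → S → ℝ)
    (hT0 : ∀ s a s', 0 ≤ T s a s') (hT1 : ∀ s a, ∑ s', T s a s' = 1)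
    (hT'0 : ∀ s a s', 0 ≤ T' s a s') (hT'1 : ∀ s a, ∑ s', T' s a s' = 1)
    (hagree : ∀ s a, (s, a) ∈ K → T s a = T' s a)
    -- every state reachable from `s₁` with positive probability within `H` steps
    -- yields a nonnegative reward under `π`
    (hnonneg : ∀ (t : ℕ), t ≤ H → ∀ p : Fin (t + 1) → S, p 0 = s₁ →
      0 < pathProb T π t p → 0 ≤ R (p (Fin.last t)) (π (p (Fin.last t)))) :
    valueH T R γ π H s₁ ≥ valueH T' R γ π H s₁ -
      (∑ p ∈ Finset.univ.filter (fun p : Fin (H + 1) → S =>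
          p 0 = s₁ ∧ ∃ t, (p t, π (p t)) ∉ K), pathProb T π H p) / (1 - γ) := by
  have hescape : {p ∈ univ.filter (fun p : Fin (H + 1) → S => p 0 = s₁) |
      ¬ ∀ t, (p t, π (p t)) ∈ K} =
      univ.filter (fun p : Fin (H + 1) → S => p 0 = s₁ ∧ ∃ t, (p t, π (p t)) ∉ K) := by
    ext p
    simp
  have hweighted_return_nonneg (p : Fin (H + 1) → S) (hp0 : p 0 = s₁) :
      0 ≤ pathProb T π H p * ∑ t : Fin (H + 1), γ ^ (t : ℕ) * R (p t) (π (p t)) := by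
    rcases (pathProb_nonneg T π hT0 H p).eq_or_lt with hzero | hpos
    · rw [← hzero, zero_mul]
    · exact mul_nonneg hpos.le <| sum_nonneg fun t _ => mul_nonneg (pow_nonneg hγ0.le _)
        (reward_nonneg_of_pathProb_pos hT0 hnonneg hp0 hpos t)
  have key := sum_mul_le_sum_mul_add_sum_filter_not_mul
    (univ.filter (fun p : Fin (H + 1) → S => p 0 = s₁)) (fun p => ∀ t, (p t, π (p t)) ∈ K)
    (p := pathProb T π H) (q := pathProb T' π H)
    (f := fun p => ∑ t : Fin (H + 1), γ ^ (t : ℕ) * R (p t) (π (p t))) (M := (1 - γ)⁻¹)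
    (by rw [sum_pathProb_eq_one T hT1, sum_pathProb_eq_one T' hT'1])
    (fun p _ hp => pathProb_eq_of_forall_mem T π T' K hagree hp)
    (fun p hp _ => hweighted_return_nonneg p (mem_filter.1 hp).2)
    (fun p _ _ => pathProb_nonneg T' π hT'0 H p)
    (fun p _ _ => sum_pow_mul_le_inv_one_sub hγ0.le hγ1 fun t => hR1 _ _)
  rw [hescape] at key
  rw [ge_iff_le, div_eq_mul_inv]
  exact sub_le_iff_le_add.mpr key

open Classical in
theorem escape_prob
    {S A : Type*} [Fintype S] [DecidableEq S] [Nonempty S] [Fintype A] [Nonempty A]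
    (γ : ℝ) (hγ0 : 0 < γ) (hγ1 : γ < 1)
    (R : S → A → ℝ) (hR1 : ∀ s a, R s a ≤ 1)
    (π : S → A) (s₁ : S) (H : ℕ) (K : Set (S × A))
    (T T' : S → A → S → ℝ)
    (hT0 : ∀ s a s', 0 ≤ T s a s') (hT1 : ∀ s a, ∑ s', T s a s' = 1)
    (hT'0 : ∀ s a s', 0 ≤ T' s a s') (hT'1 : ∀ s a, ∑ s', T' s a s' = 1)
    (hagree : ∀ s a, (s, a) ∈ K → T s a = T' s a)
    -- every state reachable from `s₁` with positive probability within `H` steps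
    -- yields a nonnegative reward under `π`
    (hnonneg : ∀ (t : ℕ), t ≤ H → ∀ p : Fin (t + 1) → S, p 0 = s₁ →
      0 < pathProb T π t p → 0 ≤ R (p (Fin.last t)) (π (p (Fin.last t)))) :
    valueH T R γ π H s₁ ≥ valueH T' R γ π H s₁ -
      (∑ p ∈ Finset.univ.filter (fun p : Fin (H + 1) → S =>
          p 0 = s₁ ∧ ∃ t, (p t, π (p t)) ∉ K), pathProb T π H p) / (1 - γ) :=
  escape_prob_general γ hγ0 hγ1 R hR1 π s₁ H K T T' hT0 hT1 hT'0 hT'1 hagree hnonneg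
end

section
/- Let S and A be finite nonempty types, T a transition function on S and A, R : S × A → ℝ a reward function, and γ ∈ (0,1). Suppose Q̃ : S × A → ℝ satisfies Q̃(s,a) ≥ R(s,a) + γ · ∑_{s'} T s a s' · max_{a'} Q̃(s',a') for every (s,a), and Q* : S × A → ℝ satisfies the Bellman optimality equation Q*(s,a) = R(s,a) + γ · ∑_{s'} T s a s' · max_{a'} Q*(s',a') for every (s,a). Then Q̃(s,a) ≥ Q*(s,a) for every (s,a). In particular, an optimistic Q-function, defined as a fixed point of the Bellman operator in which the next-state distribution is chosen optimistically within a confidence set that contains the true transition distribution, dominates the true optimal Q-function. -/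
open Finset

theorem optimistic_q_dominates
    {S A : Type*} [Fintype S] [Nonempty S] [Fintype A] [Nonempty A]
    (T : S → A → S → ℝ)
    (hT0 : ∀ s a s', 0 ≤ T s a s') (hT1 : ∀ s a, ∑ s', T s a s' = 1)
    (R : S → A → ℝ) (γ : ℝ) (hγ0 : 0 < γ) (hγ1 : γ < 1)
    (Qtilde Qstar : S → A → ℝ)
    (hQtilde : ∀ s a,
      R s a + γ * ∑ s', T s a s' * (⨆ a', Qtilde s' a') ≤ Qtilde s a)
    (hQstar : ∀ s a,
      Qstar s a = R s a + γ * ∑ s', T s a s' * (⨆ a', Qstar s' a')) :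
    ∀ s a, Qstar s a ≤ Qtilde s a := by
  set f : S × A → ℝ := fun p => Qstar p.1 p.2 - Qtilde p.1 p.2 with hf
  set M : ℝ := ⨆ p, f p with hM
  have hle : ∀ s a, f (s, a) ≤ M := fun s a =>
    le_ciSup (Set.Finite.bddAbove (Set.finite_range f)) (s, a)
  -- sup difference bound
  have hsup : ∀ s' : S, (⨆ a', Qstar s' a') ≤ (⨆ a', Qtilde s' a') + M := by
    intro s'
    refine ciSup_le fun a' => ?_
    have h1 : Qstar s' a' ≤ Qtilde s' a' + M := by
      have := hle s' a'
      simp only [hf] at this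
      linarith
    have h2 : Qtilde s' a' ≤ ⨆ a', Qtilde s' a' :=
      le_ciSup (Set.Finite.bddAbove (Set.finite_range _)) a'
    linarith
  have hMγ : M ≤ γ * M := by
    refine ciSup_le fun p => ?_
    obtain ⟨s, a⟩ := p
    have key : Qstar s a - Qtilde s a ≤
        γ * ∑ s', T s a s' * ((⨆ a', Qstar s' a') - (⨆ a', Qtilde s' a')) := by
      have h := hQtilde s a
      have h2 := hQstar s a
      have : γ * ∑ s', T s a s' * ((⨆ a', Qstar s' a') - (⨆ a', Qtilde s' a'))
          = (γ * ∑ s', T s a s' * (⨆ a', Qstar s' a'))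
            - (γ * ∑ s', T s a s' * (⨆ a', Qtilde s' a')) := by
        rw [← mul_sub, ← Finset.sum_sub_distrib]
        congr 1
        apply Finset.sum_congr rfl
        intro x _
        ring
      rw [this]
      linarith
    have hbound : ∑ s', T s a s' * ((⨆ a', Qstar s' a') - (⨆ a', Qtilde s' a'))
        ≤ ∑ s' : S, T s a s' * M := by
      apply Finset.sum_le_sum
      intro s' _
      exact mul_le_mul_of_nonneg_left (by have := hsup s'; linarith) (hT0 s a s')
    have : ∑ s' : S, T s a s' * M = M := by
      rw [← Finset.sum_mul, hT1, one_mul]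
    simp only [hf]
    calc Qstar s a - Qtilde s a ≤ γ * ∑ s' : S, T s a s' * M := by
          refine key.trans (mul_le_mul_of_nonneg_left hbound (le_of_lt hγ0))
      _ = γ * M := by rw [this]
  have hM0 : M ≤ 0 := by nlinarith
  intro s a
  have := hle s a
  simp only [hf] at this
  linarith
end

section
/- Let S be a finite nonempty type with card S = N, and let P : S → S → ℝ be a row-stochastic matrix (all entries nonnegative and each row summing to 1). Let γ ∈ (0,1), s, s' ∈ S, and let H ∈ ℕ satisfy H ≥ N. Then ∑_{t=0}^{H} γ^t · (P^t)(s,s') > 0 if and only if the (convergent) series ∑_{t=0}^{∞} γ^t · (P^t)(s,s') > 0. -/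
open Finset

private lemma rho_pow_entry_nonneg {S : Type*} [Fintype S] [DecidableEq S]
    (P : Matrix S S ℝ) (hP0 : ∀ s s', 0 ≤ P s s') :
    ∀ t x y, 0 ≤ (P ^ t) x y := by
  intro t
  induction t with
  | zero =>
      intro x y
      simp only [pow_zero, Matrix.one_apply]
      split <;> norm_num
  | succ n ih =>
      intro x y
      rw [pow_succ, Matrix.mul_apply]
      exact Finset.sum_nonneg fun z _ => mul_nonneg (ih x z) (hP0 z y)

private lemma rho_pow_row_sum {S : Type*} [Fintype S] [DecidableEq S]
    (P : Matrix S S ℝ) (hP1 : ∀ s, ∑ s', P s s' = 1) :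
    ∀ t x, ∑ y, (P ^ t) x y = 1 := by
  intro t
  induction t with
  | zero =>
      intro x
      simp [Matrix.one_apply]
  | succ n ih =>
      intro x
      simp only [pow_succ, Matrix.mul_apply]
      rw [Finset.sum_comm]
      simp_rw [← Finset.mul_sum, hP1, mul_one]
      exact ih x

private lemma rho_all_zero {S : Type*} [Fintype S] [DecidableEq S]
    (P : Matrix S S ℝ) (hP0 : ∀ s s', 0 ≤ P s s')
    (s s' : S) (H : ℕ) (hH : Fintype.card S ≤ H)
    (hz : ∀ i ≤ H, (P ^ i) s s' = 0) : ∀ t, (P ^ t) s s' = 0 := by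
  classical
  set N := Fintype.card S with hNdef
  set f : ℕ → Finset S :=
    fun t => Finset.univ.filter (fun x => ∃ i ≤ t, 0 < (P ^ i) s x) with hf
  have hmem : ∀ t x, x ∈ f t ↔ ∃ i ≤ t, 0 < (P ^ i) s x := by
    intro t x; simp [hf]
  have hmono : ∀ a b, a ≤ b → f a ⊆ f b := by
    intro a b hab x hx
    rw [hmem] at hx ⊢
    obtain ⟨i, hi, hpos⟩ := hx
    exact ⟨i, hi.trans hab, hpos⟩
  -- step: stability propagates
  have hstep : ∀ t, f t = f (t + 1) → f (t + 1) = f (t + 2) := by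
    intro t ht
    apply Finset.Subset.antisymm (hmono _ _ (by omega))
    intro x hx
    rw [hmem] at hx
    obtain ⟨i, hi, hpos⟩ := hx
    rcases Nat.lt_or_ge i (t + 2) with h' | h'
    · exact (hmem _ _).2 ⟨i, by omega, hpos⟩
    · have hieq : i = t + 2 := by omega
      subst hieq
      rw [show t + 2 = (t + 1) + 1 from rfl, pow_succ, Matrix.mul_apply] at hpos
      have : ∃ y ∈ Finset.univ, (0 : ℝ) < (P ^ (t + 1)) s y * P y x := by
        by_contra hcon
        push_neg at hcon
        have : ∑ y, (P ^ (t + 1)) s y * P y x ≤ 0 :=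
          Finset.sum_nonpos fun y hy => hcon y hy
        linarith
      obtain ⟨y, _, hy⟩ := this
      have hy1 : 0 < (P ^ (t + 1)) s y :=
        lt_of_le_of_ne (rho_pow_entry_nonneg P hP0 _ _ _)
          (by intro h; rw [← h] at hy; simpa using hy.ne')
      have hy2 : 0 < P y x := by
        rcases lt_or_eq_of_le (hP0 y x) with h | h
        · exact h
        · exfalso; rw [← h] at hy; simpa using hy.ne'
      have hyf : y ∈ f t := by
        rw [ht]
        exact (hmem _ _).2 ⟨t + 1, le_refl _, hy1⟩
      rw [hmem] at hyf
      obtain ⟨j, hj, hjpos⟩ := hyf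
      have hjx : 0 < (P ^ (j + 1)) s x := by
        rw [pow_succ, Matrix.mul_apply]
        have hle : (P ^ j) s y * P y x ≤ ∑ z, (P ^ j) s z * P z x :=
          Finset.single_le_sum (f := fun z => (P ^ j) s z * P z x)
            (fun z _ => mul_nonneg (rho_pow_entry_nonneg P hP0 _ _ _) (hP0 z x))
            (Finset.mem_univ y)
        exact lt_of_lt_of_le (mul_pos hjpos hy2) hle
      exact (hmem _ _).2 ⟨j + 1, by omega, hjx⟩
  -- constancy after stabilization
  have hchain : ∀ t, f t = f (t + 1) → ∀ u, t ≤ u → f u = f (u + 1) := by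
    intro t ht u hu
    induction u, hu using Nat.le_induction with
    | base => exact ht
    | succ n hn ih => exact hstep n ih
  have hconst : ∀ t, f t = f (t + 1) → ∀ u, t ≤ u → f u = f t := by
    intro t ht u hu
    induction u, hu using Nat.le_induction with
    | base => rfl
    | succ n hn ih => rw [← hchain t ht n hn, ih]
  -- pigeonhole: stabilization before N
  have hpig : ∃ k < N + 1, f k = f (k + 1) := by
    by_contra hcon
    push_neg at hcon
    have hcard : ∀ k ≤ N + 1, k + 1 ≤ (f k).card := by
      intro k hk
      induction k with
      | zero =>
          have : s ∈ f 0 := (hmem 0 s).2 ⟨0, le_refl _, by simp [Matrix.one_apply]⟩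
          have := Finset.card_pos.2 ⟨s, this⟩
          omega
      | succ m ih =>
          have h1 : m + 1 ≤ (f m).card := ih (by omega)
          have hssub : f m ⊂ f (m + 1) :=
            lt_of_le_of_ne (hmono m (m + 1) (by omega)) (hcon m (by omega))
          have := Finset.card_lt_card hssub
          omega
    have h1 := hcard (N + 1) (le_refl _)
    have h2 : (f (N + 1)).card ≤ N := by
      rw [hNdef]; exact Finset.card_le_univ _ |>.trans (by simp)
    omega
  obtain ⟨k, hk, hkstab⟩ := hpig
  intro t
  by_contra hne
  have hpos : 0 < (P ^ t) s s' :=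
    lt_of_le_of_ne (rho_pow_entry_nonneg P hP0 _ _ _) (Ne.symm hne)
  have hs'ft : s' ∈ f t := (hmem t s').2 ⟨t, le_refl _, hpos⟩
  have hs'fk : s' ∈ f k := by
    rcases le_or_gt t k with h | h
    · exact hmono t k h hs'ft
    · rwa [hconst k hkstab t h.le] at hs'ft
  rw [hmem] at hs'fk
  obtain ⟨i, hi, hipos⟩ := hs'fk
  have : (P ^ i) s s' = 0 := hz i (by omega)
  rw [this] at hipos
  exact lt_irrefl _ hipos

theorem rho_horizon_bound
    {S : Type*} [Fintype S] [DecidableEq S] [Nonempty S]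
    (N : ℕ) (hN : Fintype.card S = N)
    (P : Matrix S S ℝ)
    (hP0 : ∀ s s', 0 ≤ P s s') (hP1 : ∀ s, ∑ s', P s s' = 1)
    (γ : ℝ) (hγ0 : 0 < γ) (hγ1 : γ < 1)
    (s s' : S) (H : ℕ) (hH : N ≤ H) :
    (0 < ∑ t ∈ Finset.range (H + 1), γ ^ t * (P ^ t) s s') ↔
      (0 < ∑' t : ℕ, γ ^ t * (P ^ t) s s') := by
  have hterm0 : ∀ t : ℕ, 0 ≤ γ ^ t * (P ^ t) s s' := fun t =>
    mul_nonneg (pow_nonneg hγ0.le t) (rho_pow_entry_nonneg P hP0 t s s')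
  have hle1 : ∀ t : ℕ, (P ^ t) s s' ≤ 1 := by
    intro t
    have := rho_pow_row_sum P hP1 t s
    calc (P ^ t) s s' ≤ ∑ y, (P ^ t) s y :=
          Finset.single_le_sum (fun y _ => rho_pow_entry_nonneg P hP0 t s y)
            (Finset.mem_univ s')
      _ = 1 := this
  have hsumm : Summable (fun t : ℕ => γ ^ t * (P ^ t) s s') := by
    apply Summable.of_nonneg_of_le hterm0
      (fun t => by
        calc γ ^ t * (P ^ t) s s' ≤ γ ^ t * 1 :=
              mul_le_mul_of_nonneg_left (hle1 t) (pow_nonneg hγ0.le t)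
          _ = γ ^ t := mul_one _)
    exact summable_geometric_of_lt_one hγ0.le hγ1
  constructor
  · intro h
    exact lt_of_lt_of_le h (Summable.sum_le_tsum _ (fun t _ => hterm0 t) hsumm)
  · intro h
    by_contra hcon
    push_neg at hcon
    have hsz : ∑ t ∈ Finset.range (H + 1), γ ^ t * (P ^ t) s s' = 0 :=
      le_antisymm hcon (Finset.sum_nonneg fun t _ => hterm0 t)
    have hzero : ∀ i ≤ H, (P ^ i) s s' = 0 := by
      intro i hi
      have := (Finset.sum_eq_zero_iff_of_nonneg (fun t _ => hterm0 t)).1 hsz i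
        (Finset.mem_range.2 (by omega))
      have hγt : (0 : ℝ) < γ ^ i := pow_pos hγ0 i
      exact (mul_eq_zero.1 this).resolve_left (ne_of_gt hγt)
    have hall : ∀ t, (P ^ t) s s' = 0 :=
      rho_all_zero P hP0 s s' H (hN ▸ hH) hzero
    have : ∑' t : ℕ, γ ^ t * (P ^ t) s s' = 0 := by
      simp [hall]
    rw [this] at h
    exact lt_irrefl _ h
end

section
/- Let S be a finite nonempty type and τ > 0. Let p, q : S → ℝ be probability mass functions on S each of whose values lie in {0} ∪ [τ, 1], and suppose ∑_{s} |p(s) − q(s)| ≤ τ/2. Let q̂ : S → ℝ be nonnegative with q̂(s) > 0 only if q(s) > 0, and with ∑_{s} |q(s) − q̂(s)| ≤ τ/2. Then for every s ∈ S: q̂(s) > 0 if and only if p(s) > 0 (and likewise p(s) > 0 if and only if q(s) > 0). In other words, the support of p can be exactly recovered from the empirical estimate q̂ of the analogous distribution q. -/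
open Finset

theorem support_recovery
    {S : Type*} [Fintype S] [Nonempty S]
    (τ : ℝ) (hτ : 0 < τ)
    (p q : S → ℝ)
    (hp0 : ∀ s, 0 ≤ p s) (hp1 : ∑ s, p s = 1)
    (hq0 : ∀ s, 0 ≤ q s) (hq1 : ∑ s, q s = 1)
    (hpτ : ∀ s, p s = 0 ∨ (τ ≤ p s ∧ p s ≤ 1))
    (hqτ : ∀ s, q s = 0 ∨ (τ ≤ q s ∧ q s ≤ 1))
    (hpq : ∑ s, |p s - q s| ≤ τ / 2)
    (qhat : S → ℝ) (hqhat0 : ∀ s, 0 ≤ qhat s)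
    (hqhatsupp : ∀ s, 0 < qhat s → 0 < q s)
    (hqqhat : ∑ s, |q s - qhat s| ≤ τ / 2) :
    ∀ s, (0 < qhat s ↔ 0 < p s) ∧ (0 < p s ↔ 0 < q s) := by
  have hle : ∀ (f : S → ℝ) (s : S), |f s| ≤ ∑ t, |f t| := fun f s =>
    Finset.single_le_sum (fun t _ => abs_nonneg (f t)) (Finset.mem_univ s)
  have hpq' : ∀ s, (0 < p s ↔ 0 < q s) := by
    intro s
    constructor
    · intro hps
      by_contra h
      have hq : q s = 0 := le_antisymm (not_lt.mp h) (hq0 s)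
      have hpτ' : τ ≤ p s := ((hpτ s).resolve_left (ne_of_gt hps)).1
      have := (hle (fun t => p t - q t) s).trans hpq
      simp only [hq, sub_zero] at this
      rw [abs_of_nonneg (hp0 s)] at this
      linarith
    · intro hqs
      by_contra h
      have hp : p s = 0 := le_antisymm (not_lt.mp h) (hp0 s)
      have hqτ' : τ ≤ q s := ((hqτ s).resolve_left (ne_of_gt hqs)).1
      have := (hle (fun t => p t - q t) s).trans hpq
      simp only [hp, zero_sub, abs_neg] at this
      rw [abs_of_nonneg (hq0 s)] at this
      linarith
  intro s
  refine ⟨⟨fun h => (hpq' s).mpr (hqhatsupp s h), fun hps => ?_⟩, hpq' s⟩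
  by_contra h
  have hqh : qhat s = 0 := le_antisymm (not_lt.mp h) (hqhat0 s)
  have hqs := (hpq' s).mp hps
  have hqτ' : τ ≤ q s := ((hqτ s).resolve_left (ne_of_gt hqs)).1
  have := (hle (fun t => q t - qhat t) s).trans hqqhat
  simp only [hqh, sub_zero] at this
  rw [abs_of_nonneg (hq0 s)] at this
  linarith
end

section
/- Let S be a finite type, p a probability mass function on S, and let X₁, …, X_n (n ≥ 1) be i.i.d. S-valued random variables on a probability space (Ω, ℱ, ℙ) each with law p. Let p̂(s) := (1/n) · #{i ∈ {1,…,n} : X_i = s} be the empirical distribution. Then for every ε > 0, ℙ(∑_{s∈S} |p̂(s) − p(s)| ≥ ε) ≤ (2^{card S} − 2) · exp(−n ε² / 2). -/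
/-!
Write `v = p̂ - p`. Since `∑ v = 0`, the L1 norm `∑ |v|` is twice the sum of the positive part of
`v`, so if it is at least `ε` then some proper nonempty `B ⊆ S` has `p̂(B) - p(B) ≥ ε / 2`. For a
fixed `B`, `n (p̂(B) - p(B))` is a sum of `n` independent centred indicators, and Hoeffding's
inequality bounds the probability of this by `exp (-n ε² / 2)`. A union bound over the
`2 ^ card S - 2` choices of `B` finishes the proof.
-/

open Finset MeasureTheory ProbabilityTheory

theorem Finset.sum_abs_eq_two_mul_sum_filter_pos {ι : Type*} {s : Finset ι} {v : ι → ℝ}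
    (hv : ∑ i ∈ s, v i = 0) : ∑ i ∈ s, |v i| = 2 * ∑ i ∈ s with 0 < v i, v i := by
  rw [← sum_filter_add_sum_filter_not s (0 < v ·)] at hv ⊢
  have hpos : ∑ i ∈ s with 0 < v i, |v i| = ∑ i ∈ s with 0 < v i, v i :=
    sum_congr rfl fun i hi => abs_of_pos (mem_filter.1 hi).2
  have hnonpos : ∑ i ∈ s with ¬0 < v i, |v i| = -∑ i ∈ s with ¬0 < v i, v i := by
    rw [← sum_neg_distrib]
    exact sum_congr rfl fun i hi => abs_of_nonpos (not_lt.1 (mem_filter.1 hi).2)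
  linarith

theorem exists_nonempty_ne_univ_half_le_sum {S : Type*} [Fintype S] {v : S → ℝ}
    (hv : ∑ s, v s = 0) {ε : ℝ} (hε : 0 < ε) (h : ε ≤ ∑ s, |v s|) :
    ∃ B : Finset S, B.Nonempty ∧ B ≠ univ ∧ ε / 2 ≤ ∑ s ∈ B, v s := by
  classical
  rw [sum_abs_eq_two_mul_sum_filter_pos hv] at h
  refine ⟨({s | 0 < v s} : Finset S), ?_, ?_, by linarith⟩
  · by_contra hempty
    rw [not_nonempty_iff_eq_empty.1 hempty, sum_empty] at h
    linarith
  · intro huniv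
    rw [huniv, hv] at h
    linarith

theorem card_filter_nonempty_ne_univ (S : Type*) [Fintype S] [DecidableEq S] [Nonempty S] :
    (#{B : Finset S | B.Nonempty ∧ B ≠ univ} : ℝ) = 2 ^ Fintype.card S - 2 := by
  have hfilter : ({B : Finset S | B.Nonempty ∧ B ≠ univ} : Finset (Finset S)) =
      univ \ {∅, univ} := by
    ext B
    simp [nonempty_iff_ne_empty]
  have hcard : #(univ \ {∅, univ} : Finset (Finset S)) + 2 = 2 ^ Fintype.card S := by
    rw [card_sdiff_of_subset (subset_univ _), card_univ, Fintype.card_finset,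
      card_pair univ_nonempty.ne_empty.symm]
    exact Nat.sub_add_cancel (Nat.le_self_pow Fintype.card_ne_zero 2)
  rw [hfilter, eq_sub_iff_add_eq]
  exact_mod_cast hcard

theorem measureReal_sum_sub_integral_ge_le_of_mem_Icc {Ω ι : Type*} [MeasurableSpace Ω]
    {μ : Measure Ω} [IsProbabilityMeasure μ] [Fintype ι] {Y : ι → Ω → ℝ}
    (hY : ∀ i, Measurable (Y i)) (hindep : iIndepFun Y μ) {a b : ℝ}
    (hab : ∀ i, ∀ᵐ ω ∂μ, Y i ω ∈ Set.Icc a b) {t : ℝ} (ht : 0 ≤ t) :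
    μ.real {ω | t ≤ ∑ i, (Y i ω - μ[Y i])} ≤
      Real.exp (-2 * t ^ 2 / (Fintype.card ι * (b - a) ^ 2)) := by
  have hcentered : iIndepFun (fun i ω => Y i ω - μ[Y i]) μ := by
    exact hindep.comp (fun i y => y - μ[Y i]) fun _ => measurable_id.sub_const _
  convert HasSubgaussianMGF.measure_sum_ge_le_of_iIndepFun hcentered (s := univ)
    (fun i _ => hasSubgaussianMGF_of_mem_Icc (hY i).aemeasurable (hab i)) ht using 2
  push_cast
  rw [sum_const, card_univ, nsmul_eq_mul, Real.norm_eq_abs, div_pow, sq_abs,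
    show (2 : ℝ) * (Fintype.card ι * ((b - a) ^ 2 / 2 ^ 2)) = Fintype.card ι * (b - a) ^ 2 / 2 by
      ring, div_div_eq_mul_div]
  ring

section EmpiricalFrequency

variable {ι Ω S : Type*} [Fintype ι] [DecidableEq S]

noncomputable def empiricalFreq (X : ι → Ω → S) (ω : Ω) (s : S) : ℝ :=
  (Fintype.card ι : ℝ)⁻¹ * #{i | X i ω = s}

theorem sum_empiricalFreq (X : ι → Ω → S) (ω : Ω) (B : Finset S) :
    ∑ s ∈ B, empiricalFreq X ω s =
      (Fintype.card ι : ℝ)⁻¹ * ∑ i, (X i ⁻¹' B).indicator 1 ω := by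
  simp only [empiricalFreq]
  rw [← mul_sum, ← Nat.cast_sum, sum_card_fiberwise_eq_card_filter, natCast_card_filter]
  congr 1
  refine sum_congr rfl fun i _ => ?_
  by_cases h : X i ω ∈ B <;> simp [h]

theorem sum_univ_empiricalFreq [Fintype S] [Nonempty ι] (X : ι → Ω → S) (ω : Ω) :
    ∑ s, empiricalFreq X ω s = 1 := by
  simp [sum_empiricalFreq]

theorem measureReal_sum_empiricalFreq_sub_ge_le [MeasurableSpace Ω] [MeasurableSpace S]
    [MeasurableSingletonClass S] {μ : Measure Ω} [IsProbabilityMeasure μ] [Nonempty ι]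
    {X : ι → Ω → S} (hmeas : ∀ i, Measurable (X i)) (hindep : iIndepFun X μ) {p : S → ℝ}
    (hlaw : ∀ i s, μ.real (X i ⁻¹' {s}) = p s) (B : Finset S) {t : ℝ} (ht : 0 ≤ t) :
    μ.real {ω | t ≤ ∑ s ∈ B, (empiricalFreq X ω s - p s)} ≤
      Real.exp (-2 * Fintype.card ι * t ^ 2) := by
  set Y : ι → Ω → ℝ := fun i => (X i ⁻¹' B).indicator 1
  have hB : MeasurableSet (B : Set S) := B.measurableSet
  have hY : ∀ i, Measurable (Y i) := fun i => measurable_one.indicator (hmeas i hB)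
  have hindepY : iIndepFun Y μ := by
    exact hindep.comp (fun _ => (B : Set S).indicator 1) fun _ => measurable_one.indicator hB
  have hmean : ∀ i, μ[Y i] = ∑ s ∈ B, p s := fun i => by
    rw [integral_indicator_one (hmeas i hB),
      ← sum_measureReal_preimage_singleton B fun s _ => hmeas i (measurableSet_singleton s)]
    exact sum_congr rfl fun s _ => hlaw i s
  have hcard : (0 : ℝ) < Fintype.card ι := by exact_mod_cast Fintype.card_pos
  have hevent : {ω | t ≤ ∑ s ∈ B, (empiricalFreq X ω s - p s)} =
      {ω | Fintype.card ι * t ≤ ∑ i, (Y i ω - μ[Y i])} := by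
    ext ω
    simp only [Set.mem_ofPred_eq, sum_sub_distrib, sum_empiricalFreq, hmean, sum_const, card_univ,
      nsmul_eq_mul]
    rw [← mul_le_mul_iff_of_pos_left hcard, mul_sub, mul_inv_cancel_left₀ hcard.ne']
  rw [hevent]
  refine (measureReal_sum_sub_integral_ge_le_of_mem_Icc hY hindepY (a := 0) (b := 1)
    (fun i => ae_of_all _ fun ω => ?_) (by positivity)).trans_eq ?_
  · by_cases h : ω ∈ X i ⁻¹' B <;> simp [Y, h]
  · congr 1
    field_simp
    ring

end EmpiricalFrequency

theorem l1_concentration_general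
    {S : Type*} [Fintype S] [DecidableEq S] [MeasurableSpace S] [MeasurableSingletonClass S]
    {Ω : Type*} [MeasurableSpace Ω] (μ : Measure Ω) [IsProbabilityMeasure μ]
    (p : S → ℝ) (hp1 : ∑ s, p s = 1)
    (n : ℕ) (hn : 1 ≤ n) (X : Fin n → Ω → S)
    (hmeas : ∀ i, Measurable (X i))
    (hindep : iIndepFun X μ)
    (hlaw : ∀ i s, (μ (X i ⁻¹' {s})).toReal = p s)
    (ε : ℝ) (hε : 0 < ε) :
    (μ {ω | ε ≤ ∑ s, |(n : ℝ)⁻¹ *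
        (Finset.univ.filter (fun i => X i ω = s)).card - p s|}).toReal ≤
      ((2 : ℝ) ^ Fintype.card S - 2) * Real.exp (-(n : ℝ) * ε ^ 2 / 2) := by
  have : Nonempty S := not_isEmpty_iff.1 fun _ => by simp at hp1
  have : Nonempty (Fin n) := ⟨⟨0, hn⟩⟩
  have hsub : {ω | ε ≤ ∑ s, |(n : ℝ)⁻¹ * #{i | X i ω = s} - p s|} ⊆
      ⋃ B ∈ ({B | B.Nonempty ∧ B ≠ univ} : Finset (Finset S)),
        {ω | ε / 2 ≤ ∑ s ∈ B, (empiricalFreq X ω s - p s)} := by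
    intro ω hω
    have hzero : ∑ s, (empiricalFreq X ω s - p s) = 0 := by
      rw [sum_sub_distrib, sum_univ_empiricalFreq, hp1, sub_self]
    obtain ⟨B, hB, hBuniv, hle⟩ := exists_nonempty_ne_univ_half_le_sum hzero hε
      (by simpa [empiricalFreq] using hω)
    exact Set.mem_biUnion (by simp [hB, hBuniv]) hle
  calc μ.real {ω | ε ≤ ∑ s, |(n : ℝ)⁻¹ * #{i | X i ω = s} - p s|}
      ≤ ∑ B ∈ ({B | B.Nonempty ∧ B ≠ univ} : Finset (Finset S)),
          μ.real {ω | ε / 2 ≤ ∑ s ∈ B, (empiricalFreq X ω s - p s)} :=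
        (measureReal_mono hsub (measure_ne_top μ _)).trans (measureReal_biUnion_finset_le _ _)
    _ ≤ ∑ B ∈ ({B | B.Nonempty ∧ B ≠ univ} : Finset (Finset S)),
          Real.exp (-2 * n * (ε / 2) ^ 2) := by
        refine sum_le_sum fun B _ => ?_
        simpa using measureReal_sum_empiricalFreq_sub_ge_le hmeas hindep hlaw B (by positivity)
    _ = ((2 : ℝ) ^ Fintype.card S - 2) * Real.exp (-(n : ℝ) * ε ^ 2 / 2) := by
        rw [sum_const, nsmul_eq_mul, card_filter_nonempty_ne_univ]
        ring_nf

theorem l1_concentration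
    {S : Type*} [Fintype S] [DecidableEq S] [MeasurableSpace S] [MeasurableSingletonClass S]
    {Ω : Type*} [MeasurableSpace Ω] (μ : Measure Ω) [IsProbabilityMeasure μ]
    (p : S → ℝ) (hp0 : ∀ s, 0 ≤ p s) (hp1 : ∑ s, p s = 1)
    (n : ℕ) (hn : 1 ≤ n) (X : Fin n → Ω → S)
    (hmeas : ∀ i, Measurable (X i))
    (hindep : iIndepFun X μ)
    (hlaw : ∀ i s, (μ (X i ⁻¹' {s})).toReal = p s)
    (ε : ℝ) (hε : 0 < ε) :
    (μ {ω | ε ≤ ∑ s, |(n : ℝ)⁻¹ *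
        (Finset.univ.filter (fun i => X i ω = s)).card - p s|}).toReal ≤
      ((2 : ℝ) ^ Fintype.card S - 2) * Real.exp (-(n : ℝ) * ε ^ 2 / 2) :=
  l1_concentration_general μ p hp1 n hn X hmeas hindep hlaw ε hε
end

section
/- Let S be a finite type with card S ≥ 2, p a probability mass function on S, δ ∈ (0,1), and let X₁, …, X_n (n ≥ 1) be i.i.d. S-valued random variables on a probability space (Ω, ℱ, ℙ) each with law p, with empirical distribution p̂(s) := (1/n) · #{i ∈ {1,…,n} : X_i = s}. Set ε := sqrt(2 · (ln(2^{card S} − 2) − ln δ) / n). Then ℙ(∑_{s∈S} |p̂(s) − p(s)| ≥ ε) ≤ δ. Equivalently, for any β > 0, if n ≥ (2/β²) · ln((2^{card S} − 2)/δ) then ℙ(∑_{s∈S} |p̂(s) − p(s)| ≥ β) ≤ δ. -/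
open Finset MeasureTheory ProbabilityTheory

/-!
The `L¹` distance between two distributions of equal total mass is twice the excess
`∑ s ∈ A, (p̂ s - p s)` of the empirical distribution on the set `A = {s | p s < p̂ s}`, and when
the distance is positive this `A` is neither empty nor all of `S`. For each fixed `A`,
`n (p̂(A) - p(A))` is a sum of `n` independent centred indicators, so Hoeffding's inequality
bounds the probability that it reaches `n β / 2` by `exp (-n β² / 2)`. A union bound over the
`2 ^ |S| - 2` candidate sets gives `ℙ(‖p̂ - p‖₁ ≥ β) ≤ (2 ^ |S| - 2) exp (-n β² / 2)`, which is at
most `δ` as soon as `n ≥ (2 / β²) log ((2 ^ |S| - 2) / δ)`; the width `ε` is the `β` for which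
this sample size condition is an equality.
-/

theorem measure_sum_sub_integral_ge_le_of_mem_Icc {Ω ι : Type*} [MeasurableSpace Ω]
    {μ : Measure Ω} [IsProbabilityMeasure μ] [Fintype ι] {Y : ι → Ω → ℝ}
    (hY : ∀ i, Measurable (Y i)) (hindep : iIndepFun Y μ) (hY01 : ∀ i ω, Y i ω ∈ Set.Icc 0 1)
    {ε : ℝ} (hε : 0 ≤ ε) :
    μ.real {ω | ε ≤ ∑ i, (Y i ω - μ[Y i])} ≤ Real.exp (-2 * ε ^ 2 / Fintype.card ι) := by
  have hsubG : ∀ i ∈ (univ : Finset ι),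
      HasSubgaussianMGF (fun ω ↦ Y i ω - μ[Y i]) ((‖(1 : ℝ) - 0‖₊ / 2) ^ 2) μ :=
    fun i _ ↦ hasSubgaussianMGF_of_mem_Icc (hY i).aemeasurable (ae_of_all _ (hY01 i))
  have hindep' : iIndepFun (fun i ω ↦ Y i ω - μ[Y i]) μ :=
    hindep.comp (fun i (y : ℝ) ↦ y - ∫ ω, Y i ω ∂μ) fun _ ↦ measurable_sub_const _
  refine (HasSubgaussianMGF.measure_sum_ge_le_of_iIndepFun hindep' hsubG hε).trans_eq ?_
  simp
  ring_nf

def nontrivialSubsets (S : Type*) [Fintype S] [DecidableEq S] : Finset (Finset S) :=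
  (univ.erase ∅).erase univ

theorem mem_nontrivialSubsets {S : Type*} [Fintype S] [DecidableEq S] {A : Finset S} :
    A ∈ nontrivialSubsets S ↔ A.Nonempty ∧ A ≠ univ := by
  simp [nontrivialSubsets, nonempty_iff_ne_empty, and_comm]

theorem card_nontrivialSubsets (S : Type*) [Fintype S] [DecidableEq S] [Nonempty S] :
    #(nontrivialSubsets S) = 2 ^ Fintype.card S - 2 := by
  rw [nontrivialSubsets, card_erase_of_mem, card_erase_of_mem (mem_univ _), card_univ,
    Fintype.card_finset]
  · omega
  · simpa [eq_comm] using univ_nonempty.ne_empty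

theorem sum_abs_sub_eq_two_mul_sum_filter_lt {S : Type*} [Fintype S] {p q : S → ℝ}
    (hpq : ∑ s, q s = ∑ s, p s) :
    ∑ s, |q s - p s| = 2 * ∑ s with p s < q s, (q s - p s) := by
  have hzero : ∑ s, (q s - p s) = 0 := by rw [sum_sub_distrib, hpq, sub_self]
  rw [← sum_filter_add_sum_filter_not univ (fun s ↦ p s < q s)] at hzero ⊢
  have hpos : ∑ s with p s < q s, |q s - p s| = ∑ s with p s < q s, (q s - p s) :=
    sum_congr rfl fun s hs ↦ abs_of_pos (sub_pos.2 (mem_filter.1 hs).2)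
  have hneg : ∑ s with ¬p s < q s, |q s - p s| = -∑ s with ¬p s < q s, (q s - p s) := by
    rw [← sum_neg_distrib]
    exact sum_congr rfl fun s hs ↦ abs_of_nonpos (sub_nonpos.2 (not_lt.1 (mem_filter.1 hs).2))
  linarith

theorem exists_mem_nontrivialSubsets_half_le_sum_sub {S : Type*} [Fintype S] [DecidableEq S]
    {p q : S → ℝ} (hpq : ∑ s, q s = ∑ s, p s) {β : ℝ} (hβ : 0 < β)
    (h : β ≤ ∑ s, |q s - p s|) :
    ∃ A ∈ nontrivialSubsets S, β / 2 ≤ ∑ s ∈ A, (q s - p s) := by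
  rw [sum_abs_sub_eq_two_mul_sum_filter_lt hpq] at h
  refine ⟨({s | p s < q s} : Finset S), mem_nontrivialSubsets.2 ⟨?_, ?_⟩, by linarith⟩
  · by_contra hA
    rw [not_nonempty_iff_eq_empty.1 hA, sum_empty] at h
    linarith
  · intro hA
    rw [hA, sum_sub_distrib, hpq, sub_self] at h
    linarith

noncomputable def empiricalDist {S : Type*} [DecidableEq S] {n : ℕ} (x : Fin n → S) (s : S) :
    ℝ :=
  (n : ℝ)⁻¹ * #{i | x i = s}

theorem sum_empiricalDist {S : Type*} [DecidableEq S] {n : ℕ} (x : Fin n → S) (A : Finset S) :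
    ∑ s ∈ A, empiricalDist x s = (n : ℝ)⁻¹ * #{i | x i ∈ A} := by
  simp only [empiricalDist, ← mul_sum, ← Nat.cast_sum, sum_card_fiberwise_eq_card_filter]

theorem sum_univ_empiricalDist {S : Type*} [Fintype S] [DecidableEq S] {n : ℕ} (hn : n ≠ 0)
    (x : Fin n → S) : ∑ s, empiricalDist x s = 1 := by
  simp [sum_empiricalDist, hn]

section Sampling

variable {S Ω : Type*} [Fintype S] [DecidableEq S] [MeasurableSpace S]
  [MeasurableSingletonClass S] [MeasurableSpace Ω] {μ : Measure Ω} [IsProbabilityMeasure μ]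
  {p : S → ℝ} {n : ℕ} {X : Fin n → Ω → S}

theorem measure_sum_empiricalDist_sub_ge_le (hmeas : ∀ i, Measurable (X i))
    (hindep : iIndepFun X μ) (hlaw : ∀ i s, μ.real (X i ⁻¹' {s}) = p s) (hn : 0 < n)
    (A : Finset S) {ε : ℝ} (hε : 0 ≤ ε) :
    μ.real {ω | ε ≤ ∑ s ∈ A, (empiricalDist (X · ω) s - p s)} ≤
      Real.exp (-2 * n * ε ^ 2) := by
  set Y : Fin n → Ω → ℝ := fun i ↦ (A : Set S).indicator 1 ∘ X i with hY
  have hYmeas : ∀ i, Measurable (Y i) := fun i ↦ (measurable_of_finite _).comp (hmeas i)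
  have hYindep : iIndepFun Y μ := hindep.comp _ fun _ ↦ measurable_of_finite _
  have hY01 : ∀ i ω, Y i ω ∈ Set.Icc (0 : ℝ) 1 := fun i ω ↦ by
    by_cases h : X i ω ∈ A <;> simp [hY, h]
  have hmean : ∀ i, μ[Y i] = ∑ s ∈ A, p s := fun i ↦ by
    have hYi : Y i = (X i ⁻¹' A).indicator 1 := rfl
    rw [hYi, integral_indicator_one ((hmeas i) A.finite_toSet.measurableSet),
      ← sum_measureReal_preimage_singleton _ fun s _ ↦ hmeas i (measurableSet_singleton s)]
    exact sum_congr rfl fun s _ ↦ hlaw i s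
  have hscaled : ∀ ω, ∑ i, (Y i ω - μ[Y i]) =
      n * ∑ s ∈ A, (empiricalDist (X · ω) s - p s) := fun ω ↦ by
    have hcount : ∑ i, Y i ω = #{i | X i ω ∈ A} := by
      simp [hY, Set.indicator_apply, sum_boole]
    rw [sum_sub_distrib, sum_sub_distrib, sum_empiricalDist, hcount]
    simp only [hmean, sum_const, card_univ, Fintype.card_fin, nsmul_eq_mul]
    field_simp
  have hsub : {ω | ε ≤ ∑ s ∈ A, (empiricalDist (X · ω) s - p s)} ⊆
      {ω | n * ε ≤ ∑ i, (Y i ω - μ[Y i])} := fun ω (hω : ε ≤ _) ↦ by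
    rw [Set.mem_ofPred_eq, hscaled]
    exact mul_le_mul_of_nonneg_left hω n.cast_nonneg
  calc _ ≤ _ := measureReal_mono hsub
    _ ≤ _ := measure_sum_sub_integral_ge_le_of_mem_Icc hYmeas hYindep hY01 (by positivity)
    _ = _ := by
      rw [Fintype.card_fin]
      field_simp

theorem measure_sum_abs_empiricalDist_sub_ge_le [Nonempty S] (hmeas : ∀ i, Measurable (X i))
    (hindep : iIndepFun X μ) (hlaw : ∀ i s, μ.real (X i ⁻¹' {s}) = p s) (hp1 : ∑ s, p s = 1)
    (hn : 0 < n) {β : ℝ} (hβ : 0 < β) :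
    μ.real {ω | β ≤ ∑ s, |empiricalDist (X · ω) s - p s|} ≤
      (2 ^ Fintype.card S - 2) * Real.exp (-(n * β ^ 2 / 2)) := by
  have hsub : {ω | β ≤ ∑ s, |empiricalDist (X · ω) s - p s|} ⊆
      ⋃ A ∈ nontrivialSubsets S, {ω | β / 2 ≤ ∑ s ∈ A, (empiricalDist (X · ω) s - p s)} :=
    fun ω hω ↦ by
      obtain ⟨A, hA, hβA⟩ := exists_mem_nontrivialSubsets_half_le_sum_sub
        (by rw [sum_univ_empiricalDist hn.ne', hp1]) hβ hω
      exact Set.mem_biUnion hA hβA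
  have hcard : ((#(nontrivialSubsets S) : ℕ) : ℝ) = 2 ^ Fintype.card S - 2 := by
    rw [card_nontrivialSubsets, Nat.cast_sub, Nat.cast_pow, Nat.cast_ofNat]
    exact Nat.le_self_pow Fintype.card_ne_zero 2
  calc _ ≤ _ := measureReal_mono hsub (measure_ne_top _ _)
    _ ≤ _ := measureReal_biUnion_finset_le _ _
    _ ≤ ∑ _A ∈ nontrivialSubsets S, Real.exp (-(n * β ^ 2 / 2)) := sum_le_sum fun A _ ↦
      (measure_sum_empiricalDist_sub_ge_le hmeas hindep hlaw hn A (by positivity)).trans_eq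
        (by ring_nf)
    _ = _ := by rw [sum_const, nsmul_eq_mul, hcard]

end Sampling

theorem mul_exp_neg_le_of_log_div_le {C δ x : ℝ} (hC : 0 < C) (hδ : 0 < δ)
    (h : Real.log (C / δ) ≤ x) : C * Real.exp (-x) ≤ δ := by
  calc C * Real.exp (-x) ≤ C * Real.exp (-Real.log (C / δ)) := by gcongr
    _ = δ := by rw [Real.exp_neg, Real.exp_log (by positivity)]; field_simp

theorem l1_confidence_interval_general
    {S : Type*} [Fintype S] [DecidableEq S] [MeasurableSpace S] [MeasurableSingletonClass S]
    (hS : 2 ≤ Fintype.card S)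
    {Ω : Type*} [MeasurableSpace Ω] (μ : Measure Ω) [IsProbabilityMeasure μ]
    (p : S → ℝ) (hp1 : ∑ s, p s = 1)
    (δ : ℝ) (hδ0 : 0 < δ) (hδ1 : δ < 1)
    (n : ℕ) (hn : 1 ≤ n) (X : Fin n → Ω → S)
    (hmeas : ∀ i, Measurable (X i))
    (hindep : iIndepFun X μ)
    (hlaw : ∀ i s, (μ (X i ⁻¹' {s})).toReal = p s) :
    ((μ {ω | Real.sqrt (2 * (Real.log ((2 : ℝ) ^ Fintype.card S - 2) - Real.log δ) / n) ≤
        ∑ s, |(n : ℝ)⁻¹ * (Finset.univ.filter (fun i => X i ω = s)).card - p s|}).toReal ≤ δ)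
      ∧
    (∀ β : ℝ, 0 < β → (n : ℝ) ≥ 2 / β ^ 2 * Real.log (((2 : ℝ) ^ Fintype.card S - 2) / δ) →
      (μ {ω | β ≤
        ∑ s, |(n : ℝ)⁻¹ * (Finset.univ.filter (fun i => X i ω = s)).card - p s|}).toReal ≤ δ) := by
  have : Nonempty S := Fintype.card_pos_iff.1 (by omega)
  set C : ℝ := 2 ^ Fintype.card S - 2
  have hC : 2 ≤ C := by
    have : (2 : ℝ) ^ 2 ≤ 2 ^ Fintype.card S := pow_le_pow_right₀ one_le_two hS
    linarith
  have hn0 : (0 : ℝ) < n := by exact_mod_cast hn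
  have tail : ∀ β : ℝ, 0 < β → (n : ℝ) ≥ 2 / β ^ 2 * Real.log (C / δ) →
      μ.real {ω | β ≤ ∑ s, |empiricalDist (X · ω) s - p s|} ≤ δ := fun β hβ hnβ ↦
    (measure_sum_abs_empiricalDist_sub_ge_le hmeas hindep hlaw hp1 hn hβ).trans <|
      mul_exp_neg_le_of_log_div_le (by linarith) hδ0 <| by
        rw [ge_iff_le, div_mul_eq_mul_div, div_le_iff₀ (by positivity)] at hnβ
        linarith
  have hlog : 0 < Real.log C - Real.log δ := by
    linarith [Real.log_pos (by linarith : 1 < C), Real.log_neg hδ0 hδ1]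
  have hL : 0 < 2 * (Real.log C - Real.log δ) / n := by positivity
  refine ⟨tail _ (Real.sqrt_pos.2 hL) ?_, tail⟩
  rw [Real.sq_sqrt hL.le, Real.log_div (by positivity) hδ0.ne']
  field_simp
  rfl

theorem l1_confidence_interval
    {S : Type*} [Fintype S] [DecidableEq S] [MeasurableSpace S] [MeasurableSingletonClass S]
    (hS : 2 ≤ Fintype.card S)
    {Ω : Type*} [MeasurableSpace Ω] (μ : Measure Ω) [IsProbabilityMeasure μ]
    (p : S → ℝ) (hp0 : ∀ s, 0 ≤ p s) (hp1 : ∑ s, p s = 1)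
    (δ : ℝ) (hδ0 : 0 < δ) (hδ1 : δ < 1)
    (n : ℕ) (hn : 1 ≤ n) (X : Fin n → Ω → S)
    (hmeas : ∀ i, Measurable (X i))
    (hindep : iIndepFun X μ)
    (hlaw : ∀ i s, (μ (X i ⁻¹' {s})).toReal = p s) :
    ((μ {ω | Real.sqrt (2 * (Real.log ((2 : ℝ) ^ Fintype.card S - 2) - Real.log δ) / n) ≤
        ∑ s, |(n : ℝ)⁻¹ * (Finset.univ.filter (fun i => X i ω = s)).card - p s|}).toReal ≤ δ)
      ∧
    (∀ β : ℝ, 0 < β → (n : ℝ) ≥ 2 / β ^ 2 * Real.log (((2 : ℝ) ^ Fintype.card S - 2) / δ) →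
      (μ {ω | β ≤
        ∑ s, |(n : ℝ)⁻¹ * (Finset.univ.filter (fun i => X i ω = s)).card - p s|}).toReal ≤ δ) :=
  l1_confidence_interval_general hS μ p hp1 δ hδ0 hδ1 n hn X hmeas hindep hlaw
end

section
/- Let c ∈ (0, 1/2] and let h ≥ 1 be a real number. Set γ := c^{1/h} and H := h · ln(16h/c) / ln(1/c). Then γ^{H+1}/(1−γ) ≤ c/8. -/
/-!
Write `γ = c^(1/h)`, so `γ^h = c`. The horizon is chosen so that `γ^H = c/(16h)` exactly,
hence `γ^(H+1) ≤ c/(16h)`. Bernoulli's inequality `c = γ^h ≥ 1 - h(1 - γ)` gives the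
gap `1 - γ ≥ (1 - c)/h ≥ 1/(2h)`, and the two bounds combine to `c/8`.
-/

open Real

lemma div_le_one_sub_rpow_one_div {c p : ℝ} (hc : 0 ≤ c) (hp : 1 ≤ p) :
    (1 - c) / p ≤ 1 - c ^ (1 / p) := by
  have hp0 : 0 < p := one_pos.trans_le hp
  have hpow : (c ^ (1 / p)) ^ p = c := by
    rw [← rpow_mul hc, one_div_mul_cancel hp0.ne', rpow_one]
  have hbernoulli : 1 + p * (c ^ (1 / p) - 1) ≤ c := by
    have := one_add_mul_self_le_rpow_one_add
      (s := c ^ (1 / p) - 1) (by linarith [rpow_nonneg hc (1 / p)]) hp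
    rwa [add_sub_cancel, hpow] at this
  rw [div_le_iff₀ hp0]
  linarith

lemma rpow_log_div_log_one_div {c x : ℝ} (hc0 : 0 < c) (hc1 : c ≠ 1) (hx : 0 < x) :
    c ^ (log x / log (1 / c)) = x⁻¹ := by
  have hlog : log c ≠ 0 := log_ne_zero_of_pos_of_ne_one hc0 hc1
  rw [one_div, log_inv, rpow_def_of_pos hc0, div_neg, mul_neg, mul_div_cancel₀ _ hlog,
    exp_neg, exp_log hx]

theorem escape_tail_bound (c h : ℝ) (hc0 : 0 < c) (hc1 : c ≤ 1 / 2) (hh : 1 ≤ h) :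
    (c ^ (1 / h)) ^ (h * Real.log (16 * h / c) / Real.log (1 / c) + 1) /
      (1 - c ^ (1 / h)) ≤ c / 8 := by
  have hh0 : 0 < h := one_pos.trans_le hh
  set γ := c ^ (1 / h)
  have hγ1 : γ < 1 := rpow_lt_one hc0.le (by linarith) (by positivity)
  have hhorizon : γ ^ (h * log (16 * h / c) / log (1 / c)) = c / (16 * h) := by
    rw [← rpow_mul hc0.le, mul_div_assoc, ← mul_assoc, one_div_mul_cancel hh0.ne', one_mul,
      rpow_log_div_log_one_div hc0 (by linarith) (by positivity), inv_div]
  have hgap : 1 / (2 * h) ≤ 1 - γ := by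
    calc 1 / (2 * h) = (1 - 1 / 2) / h := by ring
      _ ≤ (1 - c) / h := by gcongr
      _ ≤ 1 - γ := div_le_one_sub_rpow_one_div hc0.le hh
  rw [rpow_add_one (rpow_pos_of_pos hc0 _).ne', hhorizon, div_le_iff₀ (by linarith)]
  calc c / (16 * h) * γ ≤ c / (16 * h) := mul_le_of_le_one_right (by positivity) hγ1.le
    _ = c / 8 * (1 / (2 * h)) := by ring
    _ ≤ c / 8 * (1 - γ) := by gcongr
end
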